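/- arXiv:1210.7958 — 8 statements merged into one kernel-verified Lean document; each statement's English description precedes it below -/
import Mathlib

section
/- Let G be a group whose center Z(G) has finite index n = [G : Z(G)]. Then the commutator subgroup G′ of G is finite, and its order satisfies |G′| ≤ (n² − 3n + 3)^{n(n² − 3n + 3)} ≤ n^{2n³}. -/
/-!
A commutator `⁅a, b⁆` depends only on the cosets of `a` and `b` modulo `Z(G)`, and it is trivial
when one of the cosets is trivial or the two cosets coincide. So if `[G : Z(G)] = n`, then `G`
has at most `1 + (n - 1)(n - 2) = n² − 3n + 3` commutators, and Schur's divisibility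
`|G'| ∣ n ^ (n · #commutators + 1)` bounds `|G'|`. An index `n ∈ {2, 3}` cannot occur, since
`G / Z(G)` is never cyclic of prime order; for `n ≥ 4` the extra factor `n` is absorbed by
`2 nⁿ ≤ (n + 1)ⁿ` and `n + 1 ≤ n² − 3n + 3`.
-/

open Subgroup
open scoped commutatorElement

theorem Set.ncard_offDiag_compl_singleton {α : Type*} [Finite α] (a : α) :
    ({a}ᶜ : Set α).offDiag.ncard = (Nat.card α - 1) * (Nat.card α - 2) := by
  classical
  have := Fintype.ofFinite α
  have h : ({a}ᶜ : Set α).offDiag = ((Finset.univ.erase a).offDiag : Set (α × α)) := by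
    simp [Finset.coe_offDiag, Set.compl_eq_univ_sdiff]
  rw [h, Set.ncard_coe_finset, Finset.offDiag_card, Finset.card_erase_of_mem (Finset.mem_univ _),
    Finset.card_univ, Nat.card_eq_fintype_card, ← Nat.mul_sub_one]
  rfl

namespace Subgroup

variable {G : Type*} [Group G]

theorem commutatorElement_mul_mem_center {a b z w : G} (hz : z ∈ center G)
    (hw : w ∈ center G) : ⁅a * z, b * w⁆ = ⁅a, b⁆ := by
  have hz' := mem_center_iff.mp hz
  have hw' := mem_center_iff.mp hw
  calc ⁅a * z, b * w⁆ = a * (z * (b * w)) * z⁻¹ * a⁻¹ * w⁻¹ * b⁻¹ := by group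
    _ = a * b * (w * a⁻¹) * w⁻¹ * b⁻¹ := by rw [← hz' (b * w)]; group
    _ = ⁅a, b⁆ := by rw [← hw' a⁻¹]; group

theorem commutatorElement_eq_of_mk_eq {a b a' b' : G} (ha : (a : G ⧸ center G) = a')
    (hb : (b : G ⧸ center G) = b') : ⁅a, b⁆ = ⁅a', b'⁆ := by
  rw [← commutatorElement_mul_mem_center (QuotientGroup.eq.mp ha) (QuotientGroup.eq.mp hb),
    mul_inv_cancel_left, mul_inv_cancel_left]

theorem commutatorSet_subset_insert_image_offDiag :
    commutatorSet G ⊆ insert 1 ((fun q : (G ⧸ center G) × (G ⧸ center G) ↦ ⁅q.1.out, q.2.out⁆) ''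
      ({1}ᶜ : Set (G ⧸ center G)).offDiag) := by
  rintro _ ⟨a, b, rfl⟩
  by_cases ha : (a : G ⧸ center G) = 1
  · rw [commutatorElement_eq_of_mk_eq (b' := b) ha rfl, commutatorElement_one_left]
    exact Set.mem_insert _ _
  by_cases hb : (b : G ⧸ center G) = 1
  · rw [commutatorElement_eq_of_mk_eq (a' := a) rfl hb, commutatorElement_one_right]
    exact Set.mem_insert _ _
  by_cases hab : (a : G ⧸ center G) = b
  · rw [commutatorElement_eq_of_mk_eq hab rfl, commutatorElement_self]
    exact Set.mem_insert _ _
  refine Set.mem_insert_of_mem _ ⟨(a, b), ⟨ha, hb, hab⟩, ?_⟩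
  exact commutatorElement_eq_of_mk_eq (QuotientGroup.out_eq' _) (QuotientGroup.out_eq' _)

instance finite_commutatorSet_of_finiteIndex_center [FiniteIndex (center G)] :
    Finite (commutatorSet G) :=
  Set.Finite.subset ((Set.toFinite _).image _ |>.insert 1)
    commutatorSet_subset_insert_image_offDiag

theorem card_commutatorSet_le_of_finiteIndex_center [FiniteIndex (center G)] :
    Nat.card (commutatorSet G) ≤ 1 + ((center G).index - 1) * ((center G).index - 2) :=
  calc Nat.card (commutatorSet G)
      ≤ (insert 1 ((fun q : (G ⧸ center G) × (G ⧸ center G) ↦ ⁅q.1.out, q.2.out⁆) ''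
          ({1}ᶜ : Set (G ⧸ center G)).offDiag)).ncard := by
        rw [Nat.card_coe_set_eq]
        exact Set.ncard_le_ncard commutatorSet_subset_insert_image_offDiag
          ((Set.toFinite _).image _ |>.insert 1)
    _ ≤ ({1}ᶜ : Set (G ⧸ center G)).offDiag.ncard + 1 :=
        (Set.ncard_insert_le _ _).trans
          (Nat.add_le_add_right (Set.ncard_image_le (Set.toFinite _)) 1)
    _ = _ := by rw [Set.ncard_offDiag_compl_singleton, ← index_eq_card, add_comm]

theorem index_center_ne_of_prime {p : ℕ} (hp : p.Prime) : (center G).index ≠ p := by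
  intro h
  have : Fact p.Prime := ⟨hp⟩
  have : IsCyclic (G ⧸ center G) := isCyclic_of_prime_card (by rw [← index_eq_card, h])
  have := isMulCommutative_of_isCyclic_quotient_center_self G
  rw [center_eq_top, index_top] at h
  exact hp.one_lt.ne h

end Subgroup

namespace Nat

theorem one_add_sub_one_mul_sub_two {n : ℕ} (hn : n ≠ 0) :
    1 + (n - 1) * (n - 2) = n ^ 2 + 3 - 3 * n := by
  rcases n with _ | _ | k
  · contradiction
  · rfl
  · rw [show k + 1 + 1 - 2 = k by omega, add_tsub_cancel_right]
    have : (k + 1 + 1) ^ 2 + 3 = 1 + (k + 1) * k + 3 * (k + 1 + 1) := by ring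
    omega

theorem two_mul_pow_self_le_succ_pow {n : ℕ} (hn : n ≠ 0) : 2 * n ^ n ≤ (n + 1) ^ n := by
  have hn' : (n : ℚ) ≠ 0 := by exact_mod_cast hn
  have bernoulli := one_add_mul_le_pow (a := (n : ℚ)⁻¹)
    (by linarith [inv_nonneg.mpr (Nat.cast_nonneg (α := ℚ) n)]) n
  rw [mul_inv_cancel₀ hn'] at bernoulli
  have key : (2 : ℚ) * n ^ n ≤ (n + 1) ^ n :=
    calc (2 : ℚ) * n ^ n = (1 + 1) * n ^ n := by norm_num
      _ ≤ (1 + (n : ℚ)⁻¹) ^ n * n ^ n := by gcongr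
      _ = _ := by rw [← mul_pow, add_mul, one_mul, inv_mul_cancel₀ hn']
  exact_mod_cast key

theorem pow_mul_add_one_le_pow_mul_of_lt {n m : ℕ} (hnm : n < m) :
    n ^ (n * m + 1) ≤ m ^ (n * m) := by
  rcases eq_or_ne n 0 with rfl | hn
  · simp
  have hn2 : n ≤ 2 ^ m := (Nat.lt_two_pow_self.trans_le (Nat.pow_le_pow_right two_pos hnm.le)).le
  calc n ^ (n * m + 1) = (n ^ n) ^ m * n := by rw [pow_succ, pow_mul]
    _ ≤ (n ^ n) ^ m * 2 ^ m := Nat.mul_le_mul_left _ hn2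
    _ = (2 * n ^ n) ^ m := by rw [mul_pow, mul_comm]
    _ ≤ ((n + 1) ^ n) ^ m := Nat.pow_le_pow_left (two_mul_pow_self_le_succ_pow hn) _
    _ = (n + 1) ^ (n * m) := by rw [← pow_mul]
    _ ≤ m ^ (n * m) := Nat.pow_le_pow_left hnm _

theorem pow_mul_le_pow_two_mul_cube {n m : ℕ} (hm : m ≤ n ^ 2) :
    m ^ (n * m) ≤ n ^ (2 * n ^ 3) := by
  rcases eq_or_ne n 0 with rfl | hn
  · simp_all
  calc m ^ (n * m) ≤ (n ^ 2) ^ (n * m) := Nat.pow_le_pow_left hm _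
    _ ≤ (n ^ 2) ^ (n * n ^ 2) := Nat.pow_le_pow_right (by positivity) (Nat.mul_le_mul_left n hm)
    _ = n ^ (2 * n ^ 3) := by rw [← pow_mul]; ring_nf

end Nat

/-- (Schur-type bound) If the center of `G` has finite index `n`, then the commutator
subgroup `G'` is finite, of order at most `(n² − 3n + 3)^(n(n² − 3n + 3)) ≤ n^(2n³)`.
(Here `n² − 3n + 3` is written as `n ^ 2 + 3 - 3 * n` so that natural subtraction does
not truncate.) -/
theorem commutator_finite_and_card_le_of_index_center_eq (G : Type*) [Group G]
    (n : ℕ) (hn : n ≠ 0) (hidx : (Subgroup.center G).index = n) :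
    Finite (commutator G) ∧
      Nat.card (commutator G) ≤ (n ^ 2 + 3 - 3 * n) ^ (n * (n ^ 2 + 3 - 3 * n)) ∧
      (n ^ 2 + 3 - 3 * n) ^ (n * (n ^ 2 + 3 - 3 * n)) ≤ n ^ (2 * n ^ 3) := by
  have : FiniteIndex (center G) := ⟨hidx ▸ hn⟩
  have hk : Nat.card (commutatorSet G) ≤ n ^ 2 + 3 - 3 * n :=
    Nat.one_add_sub_one_mul_sub_two hn ▸ hidx ▸ card_commutatorSet_le_of_finiteIndex_center
  have hG' : Nat.card (commutator G) ≤ n ^ (n * Nat.card (commutatorSet G) + 1) :=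
    Nat.le_of_dvd (Nat.pos_of_ne_zero (pow_ne_zero _ hn))
      (hidx ▸ card_commutator_dvd_index_center_pow G)
  refine ⟨inferInstance, hG'.trans ?_, Nat.pow_mul_le_pow_two_mul_cube (by omega)⟩
  obtain rfl | hn4 : n = 1 ∨ 4 ≤ n := by
    have := index_center_ne_of_prime (G := G) Nat.prime_two
    have := index_center_ne_of_prime (G := G) Nat.prime_three
    omega
  · simp
  · have h4n : 4 * n ≤ n * n := Nat.mul_le_mul_right n hn4
    exact (Nat.pow_le_pow_right (Nat.pos_of_ne_zero hn) (by gcongr)).trans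
      (Nat.pow_mul_add_one_le_pow_mul_of_lt (by rw [sq]; omega))
end

section
/- Let G be a finite group of order n, p a prime, and r > 0 with p^r dividing n. Then G contains at least one subgroup of order p^r, and the number of subgroups of G of order p^r is congruent to 1 modulo p. -/
/-!
Frobenius: double count the pairs `H ≤ K` with `|H| = p ^ r` and `|K| = p ^ (r + 1)`.
By induction every such `K` contains `≡ 1 (mod p)` subgroups `H`. Conversely a subgroup `K ⊇ H`
of order `p ^ (r + 1)` normalizes `H` (index `p` in a `p`-group), so these `K` correspond to the
subgroups of order `p` of `N(H) / H`, a group of order divisible by `p`. The number of subgroups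
of order `p` is `≡ 1 (mod p)`: each one contributes `p - 1` solutions of `x ^ p = 1`, and McKay's
rotation of `p`-tuples with product `1` shows that `p` divides the number of these solutions.
A count `≡ 1 (mod p)` is non-zero, which gives existence.
-/

open Subgroup QuotientGroup

theorem Nat.card_subtype_prod_modEq_card {α β : Type*} [Finite α] [Finite β] {n : ℕ}
    (R : α → β → Prop) (h : ∀ a, Nat.card {b // R a b} ≡ 1 [MOD n]) :
    Nat.card {x : α × β // R x.1 x.2} ≡ Nat.card α [MOD n] := by
  have := Fintype.ofFinite α
  calc Nat.card {x : α × β // R x.1 x.2}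
      = ∑ a, Nat.card {b // R a b} := by
        rw [← Nat.card_sigma]; exact Nat.card_congr (Equiv.subtypeProdEquivSigmaSubtype R)
    _ ≡ ∑ _a : α, 1 [MOD n] := Nat.ModEq.sum fun a _ => h a
    _ = Nat.card α := by simp

theorem Nat.card_modEq_card_of_rel {α β : Type*} [Finite α] [Finite β] {n : ℕ}
    (R : α → β → Prop) (hα : ∀ a, Nat.card {b // R a b} ≡ 1 [MOD n])
    (hβ : ∀ b, Nat.card {a // R a b} ≡ 1 [MOD n]) :
    Nat.card α ≡ Nat.card β [MOD n] :=
  calc Nat.card α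
      ≡ Nat.card {x : α × β // R x.1 x.2} [MOD n] := (Nat.card_subtype_prod_modEq_card R hα).symm
    _ = Nat.card {y : β × α // R y.2 y.1} :=
        Nat.card_congr ((Equiv.prodComm α β).subtypeEquiv fun _ => Iff.rfl)
    _ ≡ Nat.card β [MOD n] := Nat.card_subtype_prod_modEq_card (fun b a => R a b) hβ

namespace Equiv.Perm.VectorsProdEqOne

variable {G : Type*} [Group G] {n : ℕ}

def rotateEnd (G : Type*) [Group G] (n : ℕ) : Function.End (vectorsProdEqOne G n) :=
  fun v => rotate v 1

theorem rotateEnd_pow_apply (k : ℕ) (v : vectorsProdEqOne G n) :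
    (rotateEnd G n ^ k) v = rotate v k := by
  induction k generalizing v with
  | zero => exact (rotate_zero v).symm
  | succ k ih =>
    show (rotateEnd G n ^ k) (rotate v 1) = _
    rw [ih, rotate_rotate, add_comm]

theorem rotateEnd_pow_self : rotateEnd G n ^ n = 1 :=
  funext fun v => (rotateEnd_pow_apply n v).trans (rotate_length v)

theorem card_fixedPoints_rotateEnd (hn : n ≠ 0) :
    Nat.card (Function.fixedPoints (rotateEnd G n)) = Nat.card {x : G // x ^ n = 1} := by
  symm
  refine Nat.card_congr (Equiv.ofBijective
    (fun x => ⟨⟨List.Vector.replicate n x.1, ?_⟩, ?_⟩) ⟨?_, ?_⟩)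
  · show (List.replicate n x.1).prod = 1
    rw [List.prod_replicate, x.2]
  · exact Subtype.ext (Subtype.ext (List.rotate_replicate _ _ _))
  · intro x y hxy
    exact Subtype.ext ((List.replicate_right_inj hn).mp (congrArg (fun v => v.1.1.1) hxy))
  · rintro ⟨v, hv⟩
    obtain ⟨x, hx⟩ := List.rotate_one_eq_self_iff_eq_replicate.mp
      (congrArg (fun v => v.1.1) hv : v.1.1.rotate 1 = v.1.1)
    have hlen : v.1.1.length = n := v.1.2
    rw [hlen] at hx
    have hprod : v.1.1.prod = 1 := v.2
    rw [hx, List.prod_replicate] at hprod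
    exact ⟨⟨x, hprod⟩, Subtype.ext (Subtype.ext (Subtype.ext hx.symm))⟩

end Equiv.Perm.VectorsProdEqOne

section PrimeOrder

open Equiv.Perm

variable {G : Type*} [Group G] {p : ℕ} [hp : Fact p.Prime]

theorem prime_dvd_card_pow_eq_one [Finite G] (hdvd : p ∣ Nat.card G) :
    p ∣ Nat.card {x : G // x ^ p = 1} := by
  classical
  have := Fintype.ofFinite G
  have key := card_fixedPoints_modEq (p := p) (n := 1)
    (by rw [pow_one]; exact VectorsProdEqOne.rotateEnd_pow_self (G := G))
  simp only [← Nat.card_eq_fintype_card] at key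
  rw [VectorsProdEqOne.card_fixedPoints_rotateEnd hp.out.ne_zero] at key
  refine (key.dvd_iff dvd_rfl).mp ?_
  rw [Nat.card_eq_fintype_card, VectorsProdEqOne.card, ← Nat.card_eq_fintype_card]
  exact dvd_pow hdvd (Nat.sub_ne_zero_of_lt hp.out.one_lt)

theorem Subgroup.zpowers_eq_iff_of_card_eq_prime {K : Subgroup G} (hK : Nat.card K = p)
    {x : G} : zpowers x = K ↔ x ∈ K ∧ x ≠ 1 := by
  have : Finite K := Nat.finite_of_card_ne_zero (hK ▸ hp.out.ne_zero)
  constructor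
  · rintro rfl
    refine ⟨mem_zpowers x, fun hx => hp.out.one_lt.ne' ?_⟩
    rw [← hK, hx, zpowers_one_eq_bot, card_bot]
  · rintro ⟨hxK, hx⟩
    have hord : orderOf x = p :=
      ((Nat.dvd_prime hp.out).mp (hK ▸ K.orderOf_dvd_natCard hxK)).resolve_left
        (mt orderOf_eq_one_iff.mp hx)
    exact eq_of_le_of_card_ge (zpowers_le.mpr hxK) (by rw [hK, Nat.card_zpowers, hord])

theorem Subgroup.card_generators_of_card_eq_prime {K : Subgroup G} (hK : Nat.card K = p) :
    Nat.card {x : G // zpowers x = K} = p - 1 := by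
  have : Finite K := Nat.finite_of_card_ne_zero (hK ▸ hp.out.ne_zero)
  have := Fintype.ofFinite K
  classical
  calc Nat.card {x : G // zpowers x = K}
      = Nat.card {x : G // x ∈ K ∧ x ≠ 1} :=
        Nat.card_congr (Equiv.subtypeEquivRight fun _ => zpowers_eq_iff_of_card_eq_prime hK)
    _ = Nat.card {y : K // (y : G) ≠ 1} :=
        Nat.card_congr (Equiv.subtypeSubtypeEquivSubtypeInter _ _).symm
    _ = p - 1 := by simp [Nat.card_eq_fintype_card, ← hK]

theorem card_orderOf_eq_prime [Finite G] :
    Nat.card {x : G // orderOf x = p} = Nat.card {K : Subgroup G // Nat.card K = p} * (p - 1) := by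
  let f : {x : G // orderOf x = p} → {K : Subgroup G // Nat.card K = p} :=
    fun x => ⟨zpowers x, by rw [Nat.card_zpowers, x.2]⟩
  have hfiber (K) : Nat.card {x // f x = K} = p - 1 := by
    rw [← card_generators_of_card_eq_prime K.2]
    exact Nat.card_congr ((Equiv.subtypeEquivRight fun x => Subtype.ext_iff).trans
      (Equiv.subtypeSubtypeEquivSubtype (p := fun x : G => orderOf x = p)
        (q := fun x => zpowers x = K.1) fun {x} hx => by rw [← Nat.card_zpowers, hx, K.2]))
  have := Fintype.ofFinite {K : Subgroup G // Nat.card K = p}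
  rw [← Nat.card_congr (Equiv.sigmaFiberEquiv f), Nat.card_sigma]
  simp [hfiber]

theorem card_pow_eq_one_eq_card_orderOf_eq_add_one [Finite G] :
    Nat.card {x : G // x ^ p = 1} = Nat.card {x : G // orderOf x = p} + 1 := by
  classical
  calc Nat.card {x : G // x ^ p = 1}
      = Nat.card (Option {y : {x : G // x ^ p = 1} // y ≠ ⟨1, one_pow p⟩}) :=
        Nat.card_congr (Equiv.optionSubtypeNe _).symm
    _ = Nat.card {x : G // orderOf x = p} + 1 := by
        rw [Finite.card_option]
        congr 1
        exact Nat.card_congr (((Equiv.subtypeEquivRight fun _ => Subtype.ext_iff.not).trans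
          (Equiv.subtypeSubtypeEquivSubtypeInter (fun x : G => x ^ p = 1) (· ≠ 1))).trans
          (Equiv.subtypeEquivRight fun _ => orderOf_eq_prime_iff.symm))

theorem card_subgroups_card_eq_prime_modEq_one [Finite G] (hdvd : p ∣ Nat.card G) :
    Nat.card {K : Subgroup G // Nat.card K = p} ≡ 1 [MOD p] := by
  have hsol := prime_dvd_card_pow_eq_one hdvd
  rw [card_pow_eq_one_eq_card_orderOf_eq_add_one, card_orderOf_eq_prime,
    ← ZMod.natCast_eq_zero_iff] at hsol
  rw [← ZMod.natCast_eq_natCast_iff]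
  push_cast [Nat.cast_sub hp.out.one_le, ZMod.natCast_self] at hsol ⊢
  linear_combination -hsol

end PrimeOrder

namespace Subgroup

variable {G : Type*} [Group G]

theorem card_subtype_and_le (K : Subgroup G) (P : Subgroup G → Prop) :
    Nat.card {H : Subgroup G // P H ∧ H ≤ K} = Nat.card {H : Subgroup K // P (H.map K.subtype)} :=
  Nat.card_congr <| (Equiv.subtypeEquivRight fun _ => and_comm).trans <|
    (Equiv.subtypeSubtypeEquivSubtypeInter (· ≤ K) P).symm.trans
      ((MapSubtype.orderIso K).toEquiv.subtypeEquiv fun _ => Iff.rfl).symm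

theorem le_normalizer_of_card_eq_prime_pow_succ {p r : ℕ} [hp : Fact p.Prime] {H K : Subgroup G}
    (hHK : H ≤ K) (hH : Nat.card H = p ^ r) (hK : Nat.card K = p ^ (r + 1)) :
    K ≤ normalizer (H : Set G) := by
  have hindex : (H.subgroupOf K).index = (Nat.card K).minFac := by
    have := (H.subgroupOf K).card_mul_index
    rw [Nat.card_congr (subgroupOfEquivOfLe hHK).toEquiv, hH, hK, pow_succ] at this
    rw [hK, hp.out.pow_minFac r.succ_ne_zero]
    exact Nat.eq_of_mul_eq_mul_left (pow_pos hp.out.pos r) this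
  have := normal_of_index_eq_minFac_card hindex
  exact le_normalizer_of_normal_subgroupOf hHK

end Subgroup

theorem QuotientGroup.card_subgroups_card_eq_mul {G : Type*} [Group G] (N : Subgroup G)
    [N.Normal] [Finite N] (m : ℕ) :
    Nat.card {K : Subgroup G // N ≤ K ∧ Nat.card K = Nat.card N * m} =
      Nat.card {L : Subgroup (G ⧸ N) // Nat.card L = m} := by
  refine Nat.card_congr <| (Equiv.subtypeSubtypeEquivSubtypeInter (N ≤ ·) _).symm.trans
    ((comapMk'OrderIso N).toEquiv.subtypeEquiv fun L => ?_).symm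
  have hcomap : Nat.card (comap (mk' N) L) = Nat.card N * Nat.card L :=
    card_preimage_mk N (L : Set (G ⧸ N))
  show Nat.card L = m ↔ Nat.card (comap (mk' N) L) = Nat.card N * m
  rw [hcomap, Nat.mul_right_inj Nat.card_pos.ne']

theorem card_subgroups_card_eq_prime_pow_succ_and_le_modEq_one {G : Type*} [Group G] [Finite G]
    {p r : ℕ} [hp : Fact p.Prime] {H : Subgroup G} (hH : Nat.card H = p ^ r)
    (hdvd : p ^ (r + 1) ∣ Nat.card G) :
    Nat.card {K : Subgroup G // Nat.card K = p ^ (r + 1) ∧ H ≤ K} ≡ 1 [MOD p] := by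
  let N := normalizer (H : Set G)
  have hH' : Nat.card (H.subgroupOf N) = p ^ r := by
    rw [Nat.card_congr (subgroupOfEquivOfLe le_normalizer).toEquiv, hH]
  have hquot : p ∣ Nat.card (N ⧸ H.subgroupOf N) := by
    have hN := Sylow.prime_pow_dvd_card_normalizer hdvd hH
    rw [card_eq_card_quotient_mul_card_subgroup (H.subgroupOf N), hH', pow_succ, mul_comm] at hN
    exact Nat.dvd_of_mul_dvd_mul_right (pow_pos hp.out.pos r) hN
  have hcorr : Nat.card {K : Subgroup G // Nat.card K = p ^ (r + 1) ∧ H ≤ K} =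
      Nat.card {L : Subgroup (N ⧸ H.subgroupOf N) // Nat.card L = p} :=
    calc _ = Nat.card {K : Subgroup G // (Nat.card K = p ^ (r + 1) ∧ H ≤ K) ∧ K ≤ N} :=
          Nat.card_congr (Equiv.subtypeEquivRight fun K => (and_iff_left_of_imp
            fun ⟨hK, hHK⟩ => le_normalizer_of_card_eq_prime_pow_succ hHK hH hK).symm)
      _ = Nat.card {K : Subgroup N //
            Nat.card (K.map N.subtype) = p ^ (r + 1) ∧ H ≤ K.map N.subtype} :=
          card_subtype_and_le N _
      _ = Nat.card {K : Subgroup N //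
            H.subgroupOf N ≤ K ∧ Nat.card K = Nat.card (H.subgroupOf N) * p} :=
          Nat.card_congr (Equiv.subtypeEquivRight fun K => by
            rw [card_map_of_injective N.subtype_injective, hH', ← pow_succ, and_comm,
              ← map_subtype_le_map_subtype, map_subgroupOf_eq_of_le le_normalizer])
      _ = _ := card_subgroups_card_eq_mul (H.subgroupOf N) p
  rw [hcorr]
  exact card_subgroups_card_eq_prime_modEq_one hquot

theorem card_subgroups_card_eq_prime_pow_modEq_one {G : Type*} [Group G] [Finite G]
    {p r : ℕ} [Fact p.Prime] (hdvd : p ^ r ∣ Nat.card G) :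
    Nat.card {H : Subgroup G // Nat.card H = p ^ r} ≡ 1 [MOD p] := by
  induction r generalizing G with
  | zero => simpa [card_eq_one] using Nat.ModEq.refl 1
  | succ r ih =>
    refine (Nat.ModEq.trans ?_ (ih ((pow_dvd_pow p r.le_succ).trans hdvd)))
    refine (Nat.card_modEq_card_of_rel
      (fun (H : {H : Subgroup G // Nat.card H = p ^ r})
        (K : {K : Subgroup G // Nat.card K = p ^ (r + 1)}) => H.1 ≤ K.1)
      (fun H => ?_) (fun K => ?_)).symm
    · rw [Nat.card_congr (Equiv.subtypeSubtypeEquivSubtypeInter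
        (fun K : Subgroup G => Nat.card K = p ^ (r + 1)) (H.1 ≤ ·))]
      exact card_subgroups_card_eq_prime_pow_succ_and_le_modEq_one H.2 hdvd
    · rw [Nat.card_congr (Equiv.subtypeSubtypeEquivSubtypeInter
        (fun H : Subgroup G => Nat.card H = p ^ r) (· ≤ K.1)), card_subtype_and_le]
      simp only [card_map_of_injective K.1.subtype_injective]
      exact ih (by rw [K.2]; exact pow_dvd_pow p r.le_succ)

theorem exists_subgroup_card_pow_prime_and_count_modEq_one_general (G : Type*) [Group G]
    [Finite G] (p r : ℕ) (hp : p.Prime) (hdvd : p ^ r ∣ Nat.card G) :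
    (∃ H : Subgroup G, Nat.card H = p ^ r) ∧
      Nat.card {H : Subgroup G | Nat.card H = p ^ r} ≡ 1 [MOD p] := by
  have : Fact p.Prime := ⟨hp⟩
  have hcount := card_subgroups_card_eq_prime_pow_modEq_one (G := G) hdvd
  refine ⟨?_, hcount⟩
  obtain ⟨H, hH⟩ := (Nat.card_ne_zero.mp fun h0 => hp.ne_one <|
    Nat.dvd_one.mp (Nat.modEq_zero_iff_dvd.mp (h0 ▸ hcount).symm)).1
  exact ⟨H, hH⟩

/-- (Frobenius) If `p ^ r` (with `p` prime, `r > 0`) divides the order of a finite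
group `G`, then `G` has a subgroup of order `p ^ r`, and the number of subgroups of
order `p ^ r` is congruent to `1` modulo `p`. -/
theorem exists_subgroup_card_pow_prime_and_count_modEq_one (G : Type*) [Group G]
    [Finite G] (p r : ℕ) (hp : p.Prime) (hr : 0 < r) (hdvd : p ^ r ∣ Nat.card G) :
    (∃ H : Subgroup G, Nat.card H = p ^ r) ∧
      Nat.card {H : Subgroup G | Nat.card H = p ^ r} ≡ 1 [MOD p] :=
  exists_subgroup_card_pow_prime_and_count_modEq_one_general G p r hp hdvd
end

section
/- Let n ≥ 4. Then every element of the symmetric group Sₙ can be written as a product of two elements of order 2. -/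
/-!
Every permutation σ is reversed by an involution τ, i.e. τ * σ * τ = σ⁻¹: on the support of
a cycle c, identified with the cyclic group ⟨c⟩, take inversion, and for disjoint cycles
multiply the reversers. Then σ = (σ * τ) * τ with (σ * τ)² = 1, and both factors have order 2
unless σ² = 1. An involution σ is instead written as (σ * t) * t for a transposition t that
commutes with σ and differs from σ; with at least four points, t can be taken inside a 2-cycle
of σ if σ moves at least three points, and on two fixed points of σ otherwise.
-/

open Equiv

theorem exists_orderOf_eq_two_mul_of_conj_eq_inv {G : Type*} [Group G] {g τ : G}
    (hτ : τ ^ 2 = 1) (hτ₁ : τ ≠ 1) (hconj : τ * g * τ = g⁻¹) (hgτ : g ≠ τ) :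
    ∃ a b : G, orderOf a = 2 ∧ orderOf b = 2 ∧ g = a * b := by
  have hττ : τ * τ = 1 := by rwa [← sq]
  have hsq : (g * τ) ^ 2 = 1 :=
    calc (g * τ) ^ 2 = g * (τ * g * τ) := by simp only [sq, mul_assoc]
      _ = 1 := by rw [hconj, mul_inv_cancel]
  have hne : g * τ ≠ 1 := fun h =>
    hgτ (by rw [eq_inv_of_mul_eq_one_left h, inv_eq_of_mul_eq_one_right hττ])
  exact ⟨g * τ, τ, orderOf_eq_prime hsq hne, orderOf_eq_prime hτ hτ₁,
    by rw [mul_assoc, hττ, mul_one]⟩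

theorem conj_mul_eq_inv_of_commute {G : Type*} [Group G] {a b x y : G} (hab : Commute a b)
    (hay : Commute a y) (hbx : Commute b x) (hxy : Commute x y) (hx : a * x * a = x⁻¹)
    (hy : b * y * b = y⁻¹) : a * b * (x * y) * (a * b) = (x * y)⁻¹ :=
  calc a * b * (x * y) * (a * b) = a * (b * (x * (y * (a * b)))) := by simp only [mul_assoc]
    _ = a * (x * (a * (b * (y * b)))) := by
      rw [hbx.left_comm, hay.symm.left_comm, hab.symm.left_comm]
    _ = (a * x * a) * (b * y * b) := by simp only [mul_assoc]
    _ = (x * y)⁻¹ := by rw [hx, hy, ← mul_inv_rev, hxy.eq]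

namespace Equiv.Perm

variable {α : Type*} [DecidableEq α]

theorem commute_swap_of_swap_apply_eq {σ : Perm α} {x y : α}
    (h : swap (σ x) (σ y) = swap x y) : Commute σ (swap x y) := by
  rw [swap_apply_apply] at h
  exact mul_inv_eq_iff_eq_mul.1 h

theorem exists_swap_commute_ne [Fintype α] (hα : 4 ≤ Fintype.card α) {σ : Perm α}
    (hσ : σ ^ 2 = 1) : ∃ x y : α, x ≠ y ∧ Commute σ (swap x y) ∧ σ ≠ swap x y := by
  by_cases hsupp : 2 < σ.support.card
  · obtain ⟨x, hx⟩ := Finset.card_pos.1 (zero_lt_two.trans hsupp)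
    have hσσ : σ (σ x) = x := by rw [← Perm.mul_apply, ← sq, hσ, one_apply]
    obtain ⟨y, hy⟩ : ((σ.support.erase x).erase (σ x)).Nonempty := by
      have h₁ := Finset.pred_card_le_card_erase (s := σ.support) (a := x)
      have h₂ := Finset.pred_card_le_card_erase (s := σ.support.erase x) (a := σ x)
      rw [← Finset.card_pos]
      omega
    simp only [Finset.mem_erase] at hy
    refine ⟨x, σ x, (mem_support.1 hx).symm, commute_swap_of_swap_apply_eq ?_, fun h => ?_⟩
    · rw [hσσ, swap_comm]
    · exact mem_support.1 hy.2.2 (by rw [h, swap_apply_of_ne_of_ne hy.2.1 hy.1])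
  · have hcompl : 1 < σ.supportᶜ.card := by
      rw [Finset.card_compl]; omega
    obtain ⟨w, hw, z, hz, hwz⟩ := Finset.one_lt_card.1 hcompl
    rw [Finset.mem_compl, notMem_support] at hw hz
    refine ⟨w, z, hwz, commute_swap_of_swap_apply_eq (by rw [hw, hz]), fun h => hwz ?_⟩
    simpa [hw] using DFunLike.congr_fun h w

theorem IsCycle.exists_involution_conj_eq_inv [Fintype α] {c : Perm α} (hc : c.IsCycle) :
    ∃ τ : Perm α, τ ^ 2 = 1 ∧ τ * c * τ = c⁻¹ ∧ τ.support ⊆ c.support := by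
  -- `a` is inversion on `⟨c⟩`, transported to the support, on which `⟨c⟩` acts simply
  -- transitively.
  set e := hc.zpowersEquivSupport
  set c' := c.subtypePermOfSupport
  set a : Perm c.support := e.symm.trans ((Equiv.inv _).trans e)
  have hc' : ofSubtype c' = c := ofSubtype_subtypePerm _ fun _ => mem_support.2
  have ha : a * a = 1 := by ext; simp [a]
  have hca : c' * a * c' = a := by
    ext y
    obtain ⟨g, rfl⟩ := e.surjective y
    have he : ∀ g : Subgroup.zpowers c, c' (e g) = e (⟨c, Subgroup.mem_zpowers c⟩ * g) :=
      fun _ => rfl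
    simp only [Perm.mul_apply, he, a, Equiv.trans_apply, Equiv.symm_apply_apply, Equiv.inv_apply]
    rw [mul_inv_rev, IsCyclic.commGroup.mul_comm g⁻¹, mul_inv_cancel_left]
  have hreverse : a * c' * a = c'⁻¹ := by
    refine eq_inv_of_mul_eq_one_left ?_
    calc a * c' * a * c' = a * (c' * a * c') := by group
      _ = 1 := by rw [hca, ha]
  refine ⟨ofSubtype a, ?_, ?_, ?_⟩
  · rw [sq, ← map_mul, ha, map_one]
  · calc ofSubtype a * c * ofSubtype a = ofSubtype (a * c' * a) := by rw [map_mul, map_mul, hc']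
      _ = c⁻¹ := by rw [hreverse, map_inv, hc']
  · intro y hy
    by_contra hy'
    exact mem_support.1 hy (ofSubtype_apply_of_not_mem a hy')

theorem exists_involution_conj_eq_inv [Fintype α] (σ : Perm α) :
    ∃ τ : Perm α, τ ^ 2 = 1 ∧ τ * σ * τ = σ⁻¹ ∧ τ.support ⊆ σ.support := by
  induction σ using cycle_induction_on with
  | base_one => exact ⟨1, by simp⟩
  | base_cycles c hc => exact hc.exists_involution_conj_eq_inv
  | induction_disjoint σ τ hd _ ihσ ihτ =>
    obtain ⟨a, ha, haσ, haS⟩ := ihσ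
    obtain ⟨b, hb, hbτ, hbS⟩ := ihτ
    have hab : Commute a b := (hd.mono haS hbS).commute
    refine ⟨a * b, by rw [hab.mul_pow, ha, hb, one_mul], conj_mul_eq_inv_of_commute hab
      (hd.mono haS le_rfl).commute (hd.mono le_rfl hbS).symm.commute hd.commute haσ hbτ, ?_⟩
    rw [hd.support_mul]
    exact (support_mul_le a b).trans (sup_le_sup haS hbS)

theorem exists_orderOf_eq_two_mul_of_four_le_card [Fintype α] (hα : 4 ≤ Fintype.card α)
    (σ : Perm α) : ∃ a b : Perm α, orderOf a = 2 ∧ orderOf b = 2 ∧ σ = a * b := by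
  by_cases hσ : σ ^ 2 = 1
  · obtain ⟨x, y, hxy, hcomm, hne⟩ := exists_swap_commute_ne hα hσ
    have hconj : swap x y * σ * swap x y = σ⁻¹ := by
      rw [← hcomm.eq, mul_swap_mul_self, ← mul_eq_one_iff_eq_inv, ← sq, hσ]
    exact exists_orderOf_eq_two_mul_of_conj_eq_inv (by rw [sq, swap_mul_self])
      (swap_eq_one_iff.not.2 hxy) hconj hne
  · obtain ⟨τ, hτ, hconj, -⟩ := exists_involution_conj_eq_inv σ
    refine exists_orderOf_eq_two_mul_of_conj_eq_inv hτ ?_ hconj ?_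
    · rintro rfl
      rw [one_mul, mul_one] at hconj
      exact hσ (by rw [sq, mul_eq_one_iff_eq_inv, ← hconj])
    · rintro rfl
      exact hσ hτ

end Equiv.Perm

/-- For `n ≥ 4`, every element of the symmetric group `Sₙ` is a product of two
elements of order 2. -/
theorem perm_eq_mul_of_two_orderTwo (n : ℕ) (hn : 4 ≤ n) (σ : Equiv.Perm (Fin n)) :
    ∃ a b : Equiv.Perm (Fin n), orderOf a = 2 ∧ orderOf b = 2 ∧ σ = a * b :=
  Perm.exists_orderOf_eq_two_mul_of_four_le_card (by rwa [Fintype.card_fin]) σ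
end

section
/- Let n ≥ 2 with n ≠ 6. Then every automorphism of the symmetric group Sₙ is inner; that is, for every automorphism α of Sₙ there exists g ∈ Sₙ with α(σ) = gσg⁻¹ for all σ ∈ Sₙ. -/
/-!
An automorphism of `Perm α` preserves orders of elements and orders of centralizers. The
centralizer of an involution of cycle type `2^k` has order `(n - 2k)! 2^k k!`, which equals the
order `(n - 2)! 2` of the centralizer of a transposition only for `k = 1`, or `n = 6` and `k = 3`.
So for `n ≠ 6` automorphisms map transpositions to transpositions.

The images of the transpositions `(x₀ i)` then pairwise fail to commute, so any two of them share
a point, and since `(x₀ i)(x₀ j)(x₀ i) = (i j)` is not of the form `(x₀ k)`, no three of them form a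
triangle `(a b), (b c), (a c)`; hence they all move a common point `a`. Sending `x₀ ↦ a` and
`i ↦` the other point of the image of `(x₀ i)` defines a permutation `g`, and the automorphism
agrees with conjugation by `g` on the generators `(x₀ i)`.
-/

open Equiv Equiv.Perm Nat

namespace Nat

theorem two_pow_mul_factorial_lt_factorial (j : ℕ) : 2 ^ (j + 3) * (j + 4)! < (2 * j + 6)! := by
  induction j with
  | zero => decide
  | succ j ih =>
    calc 2 ^ (j + 1 + 3) * (j + 1 + 4)! = 2 * (j + 5) * (2 ^ (j + 3) * (j + 4)!) := by
          rw [show j + 1 + 4 = (j + 4) + 1 by ring, factorial_succ]; ring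
      _ < 2 * (j + 5) * (2 * j + 6)! := by gcongr
      _ ≤ (2 * j + 8) * (2 * j + 7) * (2 * j + 6)! := Nat.mul_le_mul_right _ (by nlinarith)
      _ = (2 * (j + 1) + 6)! := by
          rw [show 2 * (j + 1) + 6 = (2 * j + 6 + 1) + 1 by ring, factorial_succ (2 * j + 6 + 1),
            factorial_succ (2 * j + 6)]
          ring

theorem eq_six_of_factorial_mul_eq {n k : ℕ} (hk : 2 ≤ k) (hkn : 2 * k ≤ n)
    (h : (n - 2 * k)! * 2 ^ k * k ! = (n - 2)! * 2) : n = 6 := by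
  obtain ⟨m, rfl⟩ := Nat.exists_eq_add_of_le hkn
  obtain ⟨j, rfl⟩ := Nat.exists_eq_add_of_le' hk
  have hasc : 2 ^ (j + 1) * (j + 2)! = (m + 1).ascFactorial (2 * j + 2) := by
    rw [show 2 * (j + 2) + m - 2 = m + (2 * j + 2) by omega,
      ← factorial_mul_ascFactorial m (2 * j + 2), show 2 * (j + 2) + m - 2 * (j + 2) = m by omega,
      show 2 ^ (j + 2) = 2 ^ (j + 1) * 2 by ring] at h
    have := Nat.eq_of_mul_eq_mul_left (factorial_pos m) (by linarith :
      m ! * (2 ^ (j + 1) * (j + 2)! * 2) = m ! * ((m + 1).ascFactorial (2 * j + 2) * 2))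
    omega
  rcases Nat.eq_zero_or_pos m with rfl | hm
  · rw [one_ascFactorial] at hasc
    obtain _ | _ | i := j
    · simp [factorial] at hasc
    · rfl
    · have hlt := two_pow_mul_factorial_lt_factorial i
      ring_nf at hlt hasc
      omega
  · have hge : (2 * j + 3)! ≤ (m + 1).ascFactorial (2 * j + 2) := by
      rw [show 2 * j + 3 = 1 + (2 * j + 2) by ring, ← factorial_mul_ascFactorial, factorial_one,
        one_mul]
      exact ascFactorial_le _ (by omega)
    rw [← hasc] at hge
    obtain _ | _ | i := j
    · simp [factorial] at hge
    · simp [factorial] at hge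
    · have hlt := two_pow_mul_factorial_lt_factorial i
      have hmono := factorial_le (show 2 * i + 6 ≤ 2 * (i + 2) + 3 by omega)
      ring_nf at hlt hmono hge
      omega

end Nat

theorem MulEquiv.nat_card_centralizer_singleton {G H : Type*} [Group G] [Group H] (e : G ≃* H)
    (g : G) : Nat.card (Subgroup.centralizer {e g}) = Nat.card (Subgroup.centralizer {g}) :=
  (Nat.card_congr (e.toEquiv.subtypeEquiv fun x ↦ by
    simp [Subgroup.mem_centralizer_singleton_iff, ← map_mul, e.injective.eq_iff])).symm

namespace Equiv.Perm

variable {α : Type*} [DecidableEq α]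

theorem IsSwap.eq_swap_apply_self {t : Perm α} (ht : t.IsSwap) {a : α} (ha : t a ≠ a) :
    t = swap a (t a) := by
  obtain ⟨x, y, -, rfl⟩ := ht
  rcases (swap_apply_ne_self_iff.mp ha).2 with rfl | rfl
  · rw [swap_apply_left]
  · rw [swap_apply_right, swap_comm]

theorem apply_ne_self_or_of_not_commute_swap {a b : α} {v : Perm α}
    (h : ¬Commute (swap a b) v) : v a ≠ a ∨ v b ≠ b := by
  by_contra! hab
  have hconj := swap_apply_apply v a b
  rw [hab.1, hab.2, eq_mul_inv_iff_mul_eq] at hconj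
  exact h hconj

theorem not_commute_swap_swap {a b c : α} (hab : a ≠ b) (hac : a ≠ c) (hbc : b ≠ c) :
    ¬Commute (swap a b) (swap a c) := by
  intro h
  have := congrArg (· a) h.eq
  simp only [Perm.mul_apply, swap_apply_left, swap_apply_of_ne_of_ne hac.symm hbc.symm,
    swap_apply_of_ne_of_ne hab.symm hbc] at this
  exact hbc this.symm

theorem exists_forall_apply_ne_self_of_pairwise_not_commute [Nonempty α] {ι : Type*}
    {t : ι → Perm α} (hswap : ∀ i, (t i).IsSwap)
    (hcomm : Pairwise fun i j ↦ ¬Commute (t i) (t j))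
    (htri : ∀ i j k, i ≠ j → t i * t j * t i ≠ t k) : ∃ a, ∀ i, t i a ≠ a := by
  rcases isEmpty_or_nonempty ι with hι | ⟨⟨i₀⟩⟩
  · exact ⟨Classical.arbitrary α, isEmptyElim⟩
  obtain ⟨a, b, hab, hi₀⟩ := hswap i₀
  by_cases ha : ∀ i, t i a ≠ a
  · exact ⟨a, ha⟩
  push Not at ha
  obtain ⟨j, hja⟩ := ha
  have hji : j ≠ i₀ := by
    rintro rfl
    rw [hi₀, swap_apply_left] at hja
    exact hab hja.symm
  have hjb : t j b ≠ b :=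
    (apply_ne_self_or_of_not_commute_swap (hi₀ ▸ hcomm hji.symm)).resolve_left (not_not.2 hja)
  set c := t j b
  have hca : c ≠ a := fun h ↦ hab ((t j).injective (hja.trans h.symm))
  have hj : t j = swap b c := (hswap j).eq_swap_apply_self hjb
  refine ⟨b, fun k hkb ↦ ?_⟩
  have hki : k ≠ i₀ := by
    rintro rfl
    rw [hi₀, swap_apply_right] at hkb
    exact hab hkb
  have hkj : k ≠ j := by
    rintro rfl
    exact hjb hkb
  have hka : t k a ≠ a :=
    (apply_ne_self_or_of_not_commute_swap (hi₀ ▸ hcomm hki.symm)).resolve_right (not_not.2 hkb)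
  have hkc : t k c ≠ c :=
    (apply_ne_self_or_of_not_commute_swap (hj ▸ hcomm hkj.symm)).resolve_left (not_not.2 hkb)
  have hk : t k = swap a c := by
    have hk := (hswap k).eq_swap_apply_self hka
    rw [hk, swap_apply_ne_self_iff] at hkc
    rw [hk, hkc.2.resolve_left hca]
  apply htri i₀ j k hji.symm
  rw [hi₀, hj, hk, swap_comm a b, swap_comm b c, swap_mul_swap_mul_swap hjb hca]

theorem monoidHom_ext_swap_left {G : Type*} [Group G] [Finite α] (x₀ : α) {f f' : Perm α →* G}
    (h : ∀ i, f (swap x₀ i) = f' (swap x₀ i)) : f = f' := by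
  refine MonoidHom.eq_of_eqOn_dense closure_isSwap ?_
  rintro _ ⟨x, y, -, rfl⟩
  set s := swap x₀ x
  have hxy : swap x y = s * swap x₀ (s y) * s⁻¹ := by
    rw [← swap_apply_apply, swap_apply_left, swap_apply_self]
  rw [hxy, map_mul, map_mul, map_inv, map_mul, map_mul, map_inv, h, h]

end Equiv.Perm

namespace MulAut

variable {α : Type*} [DecidableEq α]

theorem isSwap_apply_of_card_ne_six [Fintype α]
    (hα : Fintype.card α ≠ 6) (e : MulAut (Perm α)) {t : Perm α} (ht : t.IsSwap) :
    (e t).IsSwap := by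
  have hord : orderOf (e t) = 2 := by rw [MulEquiv.orderOf_eq, ht.orderOf]
  obtain ⟨k, hk1, hk⟩ : ∃ k, 1 ≤ k ∧ (e t).cycleType = Multiset.replicate k 2 := by
    obtain ⟨k, hk⟩ := cycleType_prime_order (hord ▸ Nat.prime_two)
    exact ⟨k + 1, k.succ_pos, hord ▸ hk⟩
  rw [isSwap_iff_cycleType, hk]
  rcases eq_or_lt_of_le hk1 with rfl | hk2
  · rfl
  have hcard : (Fintype.card α - 2 * k)! * 2 ^ k * k ! = (Fintype.card α - 2)! * 2 := by
    have := e.nat_card_centralizer_singleton t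
    rw [nat_card_centralizer, nat_card_centralizer, hk, isSwap_iff_cycleType.mp ht] at this
    simpa [Multiset.toFinset_replicate, show k ≠ 0 by omega, mul_comm k 2] using this
  have hle : 2 * k ≤ Fintype.card α := by
    have := (e t).support.card_le_univ
    rwa [← sum_cycleType, hk, Multiset.sum_replicate, smul_eq_mul, mul_comm] at this
  exact absurd (eq_six_of_factorial_mul_eq hk2 hle hcard) hα

theorem exists_conj_of_isSwap_apply [Finite α] (e : MulAut (Perm α))
    (he : ∀ t : Perm α, t.IsSwap → (e t).IsSwap) :
    ∃ g : Perm α, ∀ σ, e σ = g * σ * g⁻¹ := by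
  rcases isEmpty_or_nonempty α with _ | ⟨⟨x₀⟩⟩
  · exact ⟨1, fun σ ↦ Subsingleton.elim _ _⟩
  have : Nonempty α := ⟨x₀⟩
  let t : {i // i ≠ x₀} → Perm α := fun i ↦ e (swap x₀ i)
  obtain ⟨a, ha⟩ : ∃ a, ∀ i, t i a ≠ a := by
    refine exists_forall_apply_ne_self_of_pairwise_not_commute
      (fun i ↦ he _ ⟨x₀, i, i.2.symm, rfl⟩) (fun i j hij hcomm ↦ ?_) (fun i j k hij htri ↦ ?_)
    · refine not_commute_swap_swap i.2.symm j.2.symm (Subtype.coe_ne_coe.2 hij) ?_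
      simpa [t] using hcomm.map e.symm.toMonoidHom
    · have hne : (j : α) ≠ i := Subtype.coe_ne_coe.2 hij.symm
      have hswap : swap (i : α) j = swap x₀ k := by
        apply e.injective
        change _ = t k
        rw [← htri, ← swap_mul_swap_mul_swap j.2 hne, swap_comm (j : α), map_mul, map_mul]
      have := congrArg (· x₀) hswap
      simp only [swap_apply_left, swap_apply_of_ne_of_ne i.2.symm j.2.symm] at this
      exact k.2 this.symm
  let g' : α → α := fun i ↦ e (swap x₀ i) a
  have hg'₀ : g' x₀ = a := by simp [g', ← Perm.one_def]
  have hg' : ∀ i, e (swap x₀ i) = swap (g' x₀) (g' i) := by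
    intro i
    rcases eq_or_ne i x₀ with rfl | hi
    · simp [← Perm.one_def]
    · rw [hg'₀]
      exact (he _ ⟨x₀, i, hi.symm, rfl⟩).eq_swap_apply_self (ha ⟨i, hi⟩)
  have hinj : Function.Injective g' := by
    intro i j hij
    have h : e (swap x₀ i) = e (swap x₀ j) := by rw [hg', hg', hij]
    simpa using congrArg (· x₀) (e.injective h)
  let g := Equiv.ofBijective g' (Finite.injective_iff_bijective.mp hinj)
  refine ⟨g, fun σ ↦ ?_⟩
  have := monoidHom_ext_swap_left x₀ (f := e.toMonoidHom) (f' := (MulAut.conj g).toMonoidHom)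
    fun i ↦ by
      rw [MulEquiv.coe_toMonoidHom, MulEquiv.coe_toMonoidHom, MulAut.conj_apply,
        ← swap_apply_apply]
      exact hg' i
  exact DFunLike.congr_fun this σ

end MulAut

theorem perm_aut_inner_of_ne_six_general (n : ℕ) (h6 : n ≠ 6)
    (α : MulAut (Equiv.Perm (Fin n))) :
    ∃ g : Equiv.Perm (Fin n), ∀ σ : Equiv.Perm (Fin n), α σ = g * σ * g⁻¹ :=
  α.exists_conj_of_isSwap_apply fun _ ht ↦
    α.isSwap_apply_of_card_ne_six (by rwa [Fintype.card_fin]) ht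

/-- For `n ≥ 2`, `n ≠ 6`, every automorphism of the symmetric group `Sₙ` is inner. -/
theorem perm_aut_inner_of_ne_six (n : ℕ) (h2 : 2 ≤ n) (h6 : n ≠ 6)
    (α : MulAut (Equiv.Perm (Fin n))) :
    ∃ g : Equiv.Perm (Fin n), ∀ σ : Equiv.Perm (Fin n), α σ = g * σ * g⁻¹ :=
  perm_aut_inner_of_ne_six_general n h6 α
end

section
/- Let p and q be (not necessarily distinct) primes and let G be a finite group of order pⁿq with n ≥ 1. Then G is not simple: G contains a normal subgroup that is neither the trivial subgroup nor all of G. -/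
/-!
A group of order `p ^ (n + 1)` is nilpotent, and a nilpotent simple group is abelian of prime
order. So let `p ≠ q` and suppose no Sylow subgroup is normal; then there are `q` Sylow
`p`-subgroups. If any two of them meet trivially, their nonidentity elements cover all of `G` but
`q` elements, and every Sylow `q`-subgroup must consist of exactly these, so it is unique and
normal. Otherwise choose distinct `P₁`, `P₂` with `D = P₁ ⊓ P₂` maximal. If `N_G(D)` lay in a
Sylow `p`-subgroup `T`, then, normalizers growing in the nilpotent groups `Pᵢ`, `D < Pᵢ ⊓ T` and
maximality would force `P₁ = T = P₂`. So `N_G(D)` contains a subgroup `Q` of order `q`, and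
`G = P₁ Q`; conjugating by `g = hk` with `h ∈ P₁`, `k ∈ Q` shows that every conjugate of `D` lies
in `P₁`, so the normal core of `P₁` is a proper nontrivial normal subgroup.
-/

open Subgroup
open scoped Pointwise

section

variable {G : Type*} [Group G]

namespace Subgroup

theorem lt_inf_normalizer_of_isNilpotent {P D : Subgroup G} [Group.IsNilpotent P] (h : D < P) :
    D < P ⊓ normalizer (D : Set G) := by
  have hD : D.subgroupOf P < ⊤ :=
    lt_top_iff_ne_top.mpr fun h' => h.not_ge (subgroupOf_eq_top.mp h')
  obtain ⟨x, hxN, hxD⟩ :=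
    SetLike.exists_of_lt (Group.normalizerCondition_of_isNilpotent _ hD)
  rw [← subgroupOf_normalizer_eq h.le, mem_subgroupOf] at hxN
  exact SetLike.lt_iff_le_and_exists.mpr
    ⟨le_inf h.le le_normalizer, x.1, mem_inf.mpr ⟨x.2, hxN⟩, hxD⟩

theorem le_normalCore_of_mul_eq_univ {H K D : Subgroup G} (hDH : D ≤ H)
    (hK : K ≤ normalizer (D : Set G)) (hHK : (H : Set G) * (K : Set G) = Set.univ) :
    D ≤ H.normalCore := by
  intro d hd g
  obtain ⟨h, hh, k, hk, rfl⟩ : g ∈ (H : Set G) * (K : Set G) := hHK ▸ Set.mem_univ g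
  have hkd : k * d * k⁻¹ ∈ D := (mem_normalizer_iff.mp (hK hk) d).mp hd
  simpa only [mul_inv_rev, mul_assoc] using H.mul_mem (H.mul_mem hh (hDH hkd)) (H.inv_mem hh)

end Subgroup

namespace Sylow

variable {p : ℕ}

theorem inf_lt_left {P Q : Sylow p G} (h : P ≠ Q) : (P : Subgroup G) ⊓ Q < P :=
  inf_le_left.lt_of_ne fun hPQ =>
    h (Sylow.ext (P.is_maximal' Q.isPGroup' (inf_eq_left.mp hPQ)).symm)

theorem inf_lt_right {P Q : Sylow p G} (h : P ≠ Q) : (P : Subgroup G) ⊓ Q < Q :=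
  inf_comm (P : Subgroup G) Q ▸ inf_lt_left h.symm

theorem exists_maximalFor_inf [Finite (Sylow p G)] [Nontrivial (Sylow p G)] :
    ∃ t : Sylow p G × Sylow p G,
      MaximalFor (fun t => t.1 ≠ t.2) (fun t => (t.1 : Subgroup G) ⊓ t.2) t := by
  obtain ⟨A, B, hAB⟩ := exists_pair_ne (Sylow p G)
  exact (Set.toFinite {t : Sylow p G × Sylow p G | t.1 ≠ t.2}).exists_maximalFor _ _
    ⟨(A, B), hAB⟩

variable [Fact p.Prime]

theorem card_eq_pow_of_card_eq_pow_mul [Finite G] (P : Sylow p G) {m k : ℕ}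
    (hcard : Nat.card G = p ^ m * k) (hk : ¬p ∣ k) : Nat.card P = p ^ m := by
  have hp := (Fact.out : p.Prime)
  rw [P.card_eq_multiplicity, hcard, Nat.factorization_mul (pow_ne_zero m hp.ne_zero)
    (by rintro rfl; exact hk (dvd_zero p)), Finsupp.add_apply, hp.factorization_pow,
    Finsupp.single_eq_same, Nat.factorization_eq_zero_of_not_dvd hk, add_zero]

theorem not_isPGroup_normalizer_of_maximalFor [Finite G] {t : Sylow p G × Sylow p G}
    (ht : MaximalFor (fun t => t.1 ≠ t.2) (fun t => (t.1 : Subgroup G) ⊓ t.2) t) :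
    ¬IsPGroup p (normalizer (((t.1 : Subgroup G) ⊓ t.2 : Subgroup G) : Set G)) := by
  intro hN
  obtain ⟨T, hNT⟩ := hN.exists_le_sylow
  have eq_of_lt : ∀ R : Sylow p G, (t.1 : Subgroup G) ⊓ t.2 < R → R = T := by
    intro R hR
    by_contra hRT
    have := R.isPGroup'.isNilpotent
    have hlt : (t.1 : Subgroup G) ⊓ t.2 < (R : Subgroup G) ⊓ T :=
      (lt_inf_normalizer_of_isNilpotent hR).trans_le (inf_le_inf_left _ hNT)
    exact hlt.not_ge (ht.2 (j := (R, T)) hRT hlt.le)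
  exact ht.1 ((eq_of_lt t.1 (inf_lt_left ht.1)).trans (eq_of_lt t.2 (inf_lt_right ht.1)).symm)

end Sylow

theorem not_isSimpleGroup_of_card_eq_prime_pow [Finite G] {p n : ℕ} [Fact p.Prime] (hn : n ≠ 1)
    (hcard : Nat.card G = p ^ n) : ¬IsSimpleGroup G := by
  intro hG
  have := (IsPGroup.of_card hcard).isNilpotent
  have hprime : (p ^ n).Prime := hcard ▸ IsSimpleGroup.prime_card
  exact hn hprime.eq_one_of_pow

section PrimePowMulPrime

variable [Finite G] {p q n : ℕ} [hp : Fact p.Prime] [hq : Fact q.Prime]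

theorem Sylow.card_eq_pow_of_card_eq_pow_mul_prime (hpq : p ≠ q)
    (hcard : Nat.card G = p ^ n * q) (P : Sylow p G) : Nat.card P = p ^ n :=
  P.card_eq_pow_of_card_eq_pow_mul hcard
    fun h => hpq ((Nat.prime_dvd_prime_iff_eq hp.out hq.out).mp h)

theorem Sylow.card_eq_prime_of_card_eq_pow_mul_prime (hpq : p ≠ q)
    (hcard : Nat.card G = p ^ n * q) (Q : Sylow q G) : Nat.card Q = q :=
  (Q.card_eq_pow_of_card_eq_pow_mul (m := 1) (by rw [hcard, pow_one, mul_comm])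
    fun h => hpq ((Nat.prime_dvd_prime_iff_eq hq.out hp.out).mp
      (hq.out.dvd_of_dvd_pow h)).symm).trans (pow_one q)

theorem card_sylow_eq_of_not_normal (hpq : p ≠ q) (hcard : Nat.card G = p ^ n * q)
    (P : Sylow p G) (hP : ¬(P : Subgroup G).Normal) : Nat.card (Sylow p G) = q := by
  have hindex : (P : Subgroup G).index = q := by
    have := (P : Subgroup G).card_mul_index
    rw [P.card_eq_pow_of_card_eq_pow_mul_prime hpq hcard, hcard] at this
    exact Nat.eq_of_mul_eq_mul_left (pow_pos hp.out.pos n) this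
  refine (hq.out.eq_one_or_self_of_dvd _ (hindex ▸ P.card_dvd_index)).resolve_left fun h => hP ?_
  have : Subsingleton (Sylow p G) := Finite.card_le_one_iff_subsingleton.mp h.le
  exact P.normal_of_subsingleton

theorem subsingleton_sylow_of_pairwise_disjoint (hpq : p ≠ q) (hcard : Nat.card G = p ^ n * q)
    (hnp : Nat.card (Sylow p G) = q)
    (hdisj : Pairwise fun P₁ P₂ : Sylow p G => Disjoint (P₁ : Subgroup G) P₂) :
    Subsingleton (Sylow q G) := by
  have hPcard : ∀ P : Sylow p G, (P : Set G).ncard = p ^ n := fun P =>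
    (Nat.card_coe_set_eq _).symm.trans (P.card_eq_pow_of_card_eq_pow_mul_prime hpq hcard)
  have hQcard : ∀ Q : Sylow q G, (Q : Set G).ncard = q := fun Q =>
    (Nat.card_coe_set_eq _).symm.trans (Q.card_eq_prime_of_card_eq_pow_mul_prime hpq hcard)
  set U := ⋃ P : Sylow p G, (P : Set G) \ {1}
  have hU : U.ncard = q * (p ^ n - 1) := by
    have := Fintype.ofFinite (Sylow p G)
    rw [Set.ncard_iUnion_of_finite (fun _ => Set.toFinite _), finsum_eq_sum_of_fintype]
    · simp only [Set.ncard_sdiff_singleton_of_mem (one_mem _), hPcard, Finset.sum_const,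
        Finset.card_univ, ← Nat.card_eq_fintype_card, hnp, smul_eq_mul]
    · exact fun P₁ P₂ h => Set.disjoint_left.mpr fun g hg₁ hg₂ =>
        hg₁.2 (disjoint_def.mp (hdisj h) hg₁.1 hg₂.1)
  have hQ : ∀ Q : Sylow q G, (Q : Set G) = Uᶜ := by
    intro Q
    refine Set.eq_of_subset_of_ncard_le ?_ ?_
    · intro g hgQ hgU
      obtain ⟨P, hgP⟩ := Set.mem_iUnion.mp hgU
      refine hgP.2 (disjoint_def.mp (disjoint_of_coprime_natCard ?_) hgP.1 hgQ)
      rw [P.card_eq_pow_of_card_eq_pow_mul_prime hpq hcard,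
        Q.card_eq_prime_of_card_eq_pow_mul_prime hpq hcard]
      exact ((Nat.coprime_primes hp.out hq.out).mpr hpq).pow_left n
    · have : q * (p ^ n - 1) + q = p ^ n * q := by
        rw [Nat.mul_sub_one, Nat.sub_add_cancel (Nat.le_mul_of_pos_right q
          (pow_pos hp.out.pos n)), mul_comm]
      rw [Set.ncard_compl, hU, hcard, hQcard]
      omega
  exact ⟨fun Q₁ Q₂ => Sylow.ext (SetLike.coe_injective ((hQ Q₁).trans (hQ Q₂).symm))⟩

theorem exists_le_card_eq_prime_of_not_isPGroup (hcard : Nat.card G = p ^ n * q)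
    {K : Subgroup G} (hK : ¬IsPGroup p K) : ∃ Q ≤ K, Nat.card Q = q := by
  have hqK : q ∣ Nat.card K := by
    by_contra hqK
    have hKp : Nat.card K ∣ p ^ n :=
      ((Nat.Prime.coprime_iff_not_dvd hq.out).mpr hqK).symm.dvd_of_dvd_mul_right
        (hcard ▸ K.card_subgroup_dvd_card)
    obtain ⟨m, -, hm⟩ := (Nat.dvd_prime_pow hp.out).mp hKp
    exact hK (IsPGroup.of_card hm)
  obtain ⟨y, hy⟩ := exists_prime_orderOf_dvd_card' q hqK
  exact ⟨zpowers (y : G), zpowers_le.mpr y.2, by rw [Nat.card_zpowers, orderOf_coe, hy]⟩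

theorem Sylow.inf_le_normalCore_of_maximalFor (hpq : p ≠ q) (hcard : Nat.card G = p ^ n * q)
    {t : Sylow p G × Sylow p G}
    (ht : MaximalFor (fun t => t.1 ≠ t.2) (fun t => (t.1 : Subgroup G) ⊓ t.2) t) :
    (t.1 : Subgroup G) ⊓ t.2 ≤ (t.1 : Subgroup G).normalCore := by
  obtain ⟨Q, hQN, hQ⟩ :=
    exists_le_card_eq_prime_of_not_isPGroup hcard (not_isPGroup_normalizer_of_maximalFor ht)
  have hP := t.1.card_eq_pow_of_card_eq_pow_mul_prime hpq hcard
  have hcomp : IsComplement' (t.1 : Subgroup G) Q := isComplement'_of_coprime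
    (by rw [hP, hQ, hcard])
    (by rw [hP, hQ]; exact ((Nat.coprime_primes hp.out hq.out).mpr hpq).pow_left n)
  exact le_normalCore_of_mul_eq_univ inf_le_left hQN hcomp.mul_eq

theorem not_isSimpleGroup_of_card_eq_prime_pow_mul_prime_of_ne (hpq : p ≠ q) (hn : n ≠ 0)
    (hcard : Nat.card G = p ^ n * q) : ¬IsSimpleGroup G := by
  intro hG
  have not_normal : ∀ H : Subgroup G, 1 < Nat.card H → Nat.card H < Nat.card G → ¬H.Normal := by
    intro H h1 h2 hH
    rcases hG.eq_bot_or_eq_top_of_normal H hH with rfl | rfl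
    · exact h1.ne' card_bot
    · exact h2.ne card_top
  have hP : ∀ P : Sylow p G, Nat.card P = p ^ n :=
    Sylow.card_eq_pow_of_card_eq_pow_mul_prime hpq hcard
  have hpn : 1 < p ^ n := Nat.one_lt_pow hn hp.out.one_lt
  have hPG : p ^ n < Nat.card G := hcard ▸ lt_mul_of_one_lt_right (by omega) hq.out.one_lt
  obtain ⟨P⟩ : Nonempty (Sylow p G) := inferInstance
  have hnp := card_sylow_eq_of_not_normal hpq hcard P (not_normal P (hP P ▸ hpn) (hP P ▸ hPG))
  have : Nontrivial (Sylow p G) := Finite.one_lt_card_iff_nontrivial.mp (hnp ▸ hq.out.one_lt)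
  obtain ⟨t, ht⟩ := Sylow.exists_maximalFor_inf (p := p) (G := G)
  by_cases hD : (t.1 : Subgroup G) ⊓ t.2 = ⊥
  · have hdisj : Pairwise fun P₁ P₂ : Sylow p G => Disjoint (P₁ : Subgroup G) P₂ :=
      fun P₁ P₂ h => by
        show Disjoint (P₁ : Subgroup G) P₂
        rw [disjoint_iff, ← le_bot_iff, ← hD]
        exact ht.2 (j := (P₁, P₂)) h (by simp only [hD, bot_le])
    have := subsingleton_sylow_of_pairwise_disjoint hpq hcard hnp hdisj
    obtain ⟨Q⟩ : Nonempty (Sylow q G) := inferInstance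
    have hQ := Q.card_eq_prime_of_card_eq_pow_mul_prime hpq hcard
    refine not_normal Q ?_ ?_ Q.normal_of_subsingleton
    · rw [hQ]; exact hq.out.one_lt
    · rw [hQ, hcard]; exact lt_mul_of_one_lt_left hq.out.pos hpn
  · have hcore := Sylow.inf_le_normalCore_of_maximalFor hpq hcard ht
    exact not_normal _ ((one_lt_card_iff_ne_bot _).mpr fun h => hD (le_bot_iff.mp (h ▸ hcore)))
      ((card_le_of_le (normalCore_le _)).trans_lt (hP t.1 ▸ hPG)) (normalCore_normal _)

end PrimePowMulPrime

end

/-- A finite group of order `pⁿq` (`p`, `q` primes, not necessarily distinct, `n ≥ 1`)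
is not simple: it contains a normal subgroup other than the trivial subgroup and the
whole group. -/
theorem exists_proper_normal_subgroup_of_card_pow_prime_mul_prime (G : Type*)
    [Group G] [Finite G] (p q n : ℕ) (hp : p.Prime) (hq : q.Prime) (hn : 1 ≤ n)
    (hcard : Nat.card G = p ^ n * q) :
    ∃ H : Subgroup G, H.Normal ∧ H ≠ ⊥ ∧ H ≠ ⊤ := by
  have := Fact.mk hp
  have := Fact.mk hq
  have : Nontrivial G := Finite.one_lt_card_iff_nontrivial.mp
    (hcard ▸ one_lt_mul_of_le_of_lt (Nat.one_le_pow _ _ hp.pos) hq.one_lt)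
  by_contra! hsimple
  have hG : IsSimpleGroup G := ⟨fun H hH => or_iff_not_imp_left.mpr (hsimple H hH)⟩
  rcases eq_or_ne p q with rfl | hpq
  · exact not_isSimpleGroup_of_card_eq_prime_pow (by omega) (hcard.trans (pow_succ p n).symm) hG
  · exact not_isSimpleGroup_of_card_eq_prime_pow_mul_prime_of_ne hpq (by omega) hcard hG
end

section
/- Let G be a finite group, p a prime dividing |G|, and P a Sylow p-subgroup of G with P ⊆ Z(G). Then there exists a (normal) subgroup K of G such that G is isomorphic to the direct product P × K. -/
/-!
Since `P` is central, its normalizer lies in its centralizer, so Burnside's transfer theorem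
makes the kernel `K` of the transfer `G →* P` a normal complement of `P`. A complement of a
central subgroup is an internal direct factor: multiplication `P × K → G` is a bijective
homomorphism because `P` commutes with `K`.
-/

namespace Subgroup

variable {G : Type*} [Group G] {H K : Subgroup G}

theorem normalizer_le_centralizer_of_le_center (hH : H ≤ center G) :
    normalizer H ≤ centralizer (H : Set G) := by
  rw [centralizer_eq_top_iff_subset.mpr hH]
  exact le_top

noncomputable def IsComplement'.mulEquivProdOfLeCenter (hHK : H.IsComplement' K)
    (hH : H ≤ center G) : H × K ≃* G :=
  MulEquiv.ofBijective
    (H.subtype.noncommCoprod K.subtype fun h k => (mem_center_iff.mp (hH h.2) k).symm) hHK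

end Subgroup

theorem sylow_central_direct_factor_general (G : Type*) [Group G] [Finite G]
    (p : ℕ) (hp : p.Prime) (P : Sylow p G)
    (hP : (P : Subgroup G) ≤ Subgroup.center G) :
    ∃ K : Subgroup G, K.Normal ∧ Nonempty (G ≃* (↥(P : Subgroup G)) × (↥K)) := by
  have : Fact p.Prime := ⟨hp⟩
  have hN := Subgroup.normalizer_le_centralizer_of_le_center hP
  have hK := (MonoidHom.ker_transferSylow_isComplement' P hN).symm
  exact ⟨_, inferInstance, ⟨(hK.mulEquivProdOfLeCenter hP).symm⟩⟩

/-- If a Sylow `p`-subgroup `P` of a finite group `G` is contained in the center of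
`G`, then `G` is isomorphic to the direct product of `P` with a normal subgroup `K`. -/
theorem sylow_central_direct_factor (G : Type*) [Group G] [Finite G]
    (p : ℕ) (hp : p.Prime) (hdvd : p ∣ Nat.card G) (P : Sylow p G)
    (hP : (P : Subgroup G) ≤ Subgroup.center G) :
    ∃ K : Subgroup G, K.Normal ∧ Nonempty (G ≃* (↥(P : Subgroup G)) × (↥K)) :=
  sylow_central_direct_factor_general G p hp P hP
end

section
/- (Sanov) Let n ≥ 2 be an integer, and let x = [[1, n], [0, 1]] and y = [[1, 0], [n, 1]] in SL₂(ℤ). Then {x, y} is a free generating set of the subgroup of SL₂(ℤ) it generates: no nonempty reduced word in x and y equals the identity, i.e. the canonical homomorphism from the free group on two generators to SL₂(ℤ) sending the generators to x and y is injective. -/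
/-!
`SL₂(ℤ)` acts on the upper half-plane by Möbius transformations. There `x` acts as
`z ↦ z + n` and `y` as `z ↦ z / (n z + 1)`, i.e. it translates `1 / z` by `n`. Since
`n ≥ 2`, the ping-pong lemma applies to the regions `Re z > 1`, `Re z ≤ -1`,
`Re (1 / z) > 1`, `Re (1 / z) ≤ -1`; the first two are disjoint from the last two because
`|Re z| ≥ 1` forces `|z|² > |Re z|`, hence `|Re (1 / z)| = |Re z| / |z|² < 1`.
-/

open scoped Pointwise MatrixGroups UpperHalfPlane

section PingPong

universe u

variable {ι G : Type u} {α : Type*} [Group G] [MulAction G α]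

theorem add_two_mul_le_apply_pow_smul {f : α → ℝ} {a : G} (h : ∀ z, f z + 2 ≤ f (a • z))
    (z : α) (k : ℕ) : f z + 2 * k ≤ f (a ^ k • z) := by
  induction k with
  | zero => simp
  | succ k ih =>
    rw [pow_succ', mul_smul]
    push_cast
    linarith [h (a ^ k • z)]

theorem exists_lt_apply_of_add_two_le [Nonempty α] {f : α → ℝ} {a : G}
    (h : ∀ z, f z + 2 ≤ f (a • z)) (c : ℝ) : ∃ z, c < f z := by
  obtain ⟨z⟩ := ‹Nonempty α›
  obtain ⟨k, hk⟩ := exists_nat_gt (c - f z)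
  exact ⟨a ^ k • z, by linarith [add_two_mul_le_apply_pow_smul h z k]⟩

theorem FreeGroup.injective_lift_of_translations [Nontrivial ι] [Nonempty α] (a : ι → G)
    (f : ι → α → ℝ) (hshift : ∀ i z, f i z + 2 ≤ f i (a i • z))
    (hsep : Pairwise fun i j => ∀ z, 1 ≤ |f i z| → |f j z| < 1) :
    Function.Injective (FreeGroup.lift a) := by
  have hsep' {i j z} (hij : i ≠ j) (hi : 1 ≤ |f i z|) (hj : 1 ≤ |f j z|) : False :=
    (hsep hij z hi).not_ge hj
  have one_le_abs_of_one_lt {t : ℝ} (h : 1 < t) : 1 ≤ |t| := le_abs.2 (.inl h.le)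
  have one_le_abs_of_le_neg_one {t : ℝ} (h : t ≤ -1) : 1 ≤ |t| :=
    le_abs.2 (.inr (by linarith))
  refine FreeGroup.injective_lift_of_ping_pong a (fun i => {z | 1 < f i z})
    (fun i => {z | f i z ≤ -1}) (fun i => exists_lt_apply_of_add_two_le (hshift i) 1)
    ?_ ?_ ?_ ?_ ?_
  · exact fun i j hij => Set.disjoint_left.2 fun z hi hj =>
      hsep' hij (one_le_abs_of_one_lt hi) (one_le_abs_of_one_lt hj)
  · exact fun i j hij => Set.disjoint_left.2 fun z hi hj =>
      hsep' hij (one_le_abs_of_le_neg_one hi) (one_le_abs_of_le_neg_one hj)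
  · intro i j
    refine Set.disjoint_left.2 fun z (hi : 1 < f i z) (hj : f j z ≤ -1) => ?_
    obtain rfl | hij := eq_or_ne i j
    · linarith
    · exact hsep' hij (one_le_abs_of_one_lt hi) (one_le_abs_of_le_neg_one hj)
  · rintro i _ ⟨z, hz, rfl⟩
    have : -1 < f i z := lt_of_not_ge hz
    exact show 1 < f i (a i • z) by linarith [hshift i z]
  · rintro i _ ⟨z, hz, rfl⟩
    have : f i z ≤ 1 := le_of_not_gt hz
    have := hshift i ((a i)⁻¹ • z)
    rw [smul_inv_smul] at this
    exact show f i ((a i)⁻¹ • z) ≤ -1 by linarith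

end PingPong

theorem Complex.abs_re_inv_lt_one {w : ℂ} (hw : w.im ≠ 0) (hre : 1 ≤ |w.re|) :
    |w⁻¹.re| < 1 := by
  have hre_lt : |w.re| < normSq w := by
    rw [normSq_apply, ← abs_mul_abs_self w.re]
    nlinarith [mul_self_pos.2 hw]
  rw [inv_re, abs_div, abs_of_pos (hre_lt.trans_le' (by linarith)), div_lt_one (by linarith)]
  exact hre_lt

namespace UpperHalfPlane

theorem re_smul_of_upper_unitriangular {x : SL(2, ℤ)} {n : ℤ}
    (hx : (x : Matrix (Fin 2) (Fin 2) ℤ) = !![1, n; 0, 1]) (z : ℍ) :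
    (x • z).re = z.re + n := by
  have : ((x • z : ℍ) : ℂ) = z + n := by
    rw [coe_specialLinearGroup_apply]
    simp [hx]
  simpa using congrArg Complex.re this

theorem inv_coe_smul_of_lower_unitriangular {y : SL(2, ℤ)} {n : ℤ}
    (hy : (y : Matrix (Fin 2) (Fin 2) ℤ) = !![1, 0; n, 1]) (z : ℍ) :
    ((y • z : ℍ) : ℂ)⁻¹ = (z : ℂ)⁻¹ + n := by
  rw [coe_specialLinearGroup_apply]
  simp [hy]
  field_simp [z.ne_zero]
  ring

end UpperHalfPlane

/-- (Sanov) For an integer `n ≥ 2`, the matrices `[[1, n], [0, 1]]` and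
`[[1, 0], [n, 1]]` freely generate a free subgroup of `SL₂(ℤ)`: the canonical
homomorphism from the free group on two generators sending them to these matrices is
injective. -/
theorem sanov_free_subgroup (n : ℤ) (hn : 2 ≤ n)
    (x y : Matrix.SpecialLinearGroup (Fin 2) ℤ)
    (hx : (x : Matrix (Fin 2) (Fin 2) ℤ) = !![1, n; 0, 1])
    (hy : (y : Matrix (Fin 2) (Fin 2) ℤ) = !![1, 0; n, 1]) :
    Function.Injective ⇑(FreeGroup.lift (fun b : Bool => if b then x else y)) := by
  have hn' : (2 : ℝ) ≤ n := mod_cast hn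
  refine FreeGroup.injective_lift_of_translations (α := ℍ) _
    (fun b z => if b then z.re else (z : ℂ)⁻¹.re) ?_ ?_
  · rintro (_ | _) z
    · simp only [Bool.false_eq_true, if_false, Complex.add_re, Complex.intCast_re,
        UpperHalfPlane.inv_coe_smul_of_lower_unitriangular hy]
      linarith
    · simp only [if_true, UpperHalfPlane.re_smul_of_upper_unitriangular hx]
      linarith
  · rintro (_ | _) (_ | _) hij z <;> simp only [ne_eq, not_true_eq_false] at hij <;>
      simp only [Bool.false_eq_true, if_true, if_false]
    · have him : (z : ℂ)⁻¹.im ≠ 0 := by simp [z.im_ne_zero, z.ne_zero]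
      simpa using Complex.abs_re_inv_lt_one him
    · exact Complex.abs_re_inv_lt_one z.im_ne_zero
end

section
/- Every free group is residually finite: for every non-identity element w of a free group G there exists a subgroup of finite index in G not containing w; equivalently, the intersection of all finite-index subgroups of G is the trivial subgroup. -/
/-!
Let `w ≠ 1` have reduced word `L`, and let the letter `a` act on the finitely many suffixes of `L`
by `l ↦ (a, true) :: l` and `(a, false) :: l ↦ l`, wherever these are again suffixes. Since `L` has
no cancelling pair `(a, b), (a, !b)`, this partial map is injective, so it extends to a permutation
of the suffixes. Reading `L` from the right, `w` then carries the empty suffix to `L` itself, so `w`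
acts nontrivially through a finite permutation group.
-/

open Function Set

theorem Set.InjOn.exists_perm_eqOn {β : Type*} {s : Set β} [Finite s] {f : β → β}
    (h : InjOn f s) : ∃ σ : Equiv.Perm β, EqOn σ f s := by
  obtain ⟨σ, hσ⟩ := Equiv.Perm.exists_extending_pair _ _ Subtype.val_injective h.injective
  exact ⟨σ, fun x hx => hσ ⟨x, hx⟩⟩

theorem Group.ResiduallyFinite.of_injective {G H : Type*} [Group G] [Group H]
    [Group.ResiduallyFinite H] (f : G →* H) (hf : Injective f) : Group.ResiduallyFinite G := by
  refine Group.residuallyFinite_of_forall_exists_finite_monoidHom fun g hg => ?_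
  obtain ⟨K, hK⟩ := Group.exists_finiteIndexNormalSubgroup_notMem (f g)
    ((map_ne_one_iff f hf).mpr hg)
  exact ⟨_, _, inferInstance, (QuotientGroup.mk' K.toSubgroup).comp f,
    by rwa [MonoidHom.comp_apply, QuotientGroup.mk'_apply, ne_eq, QuotientGroup.eq_one_iff]⟩

namespace FreeGroup

variable {α : Type*} {L : List (α × Bool)}

abbrev Suffix (L : List (α × Bool)) := {l : List (α × Bool) // l <:+ L}

instance : Finite (Suffix L) :=
  ((List.finite_toSet L.tails).subset fun l hl => (List.mem_tails l L).mpr hl).to_subtype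

def Suffix.nil : Suffix L := ⟨[], List.nil_suffix⟩

open Classical in
noncomputable def prependOrDrop (a : α) (l : Suffix L) : Suffix L :=
  if h : (a, true) :: l.1 <:+ L then ⟨_, h⟩ else ⟨l.1.tail, (List.tail_suffix _).trans l.2⟩

def prependOrDropDomain (L : List (α × Bool)) (a : α) : Set (Suffix L) :=
  {l | (a, true) :: l.1 <:+ L ∨ ∃ l', l.1 = (a, false) :: l'}

theorem IsReduced.not_suffix_cons_cons (hL : IsReduced L) (a : α) {b : Bool}
    (l : List (α × Bool)) : ¬ (a, b) :: (a, !b) :: l <:+ L := fun h => by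
  have := (isReduced_cons_cons.mp (hL.infix h.isInfix)).1 rfl
  cases b <;> simp at this

theorem injOn_prependOrDrop (hL : IsReduced L) (a : α) :
    InjOn (prependOrDrop (L := L) a) (prependOrDropDomain L a) := by
  rintro ⟨l, hl⟩ hlD ⟨m, hm⟩ hmD heq
  simp only [prependOrDrop, Subtype.ext_iff] at heq ⊢
  split_ifs at heq with hl' hm' hm'
  · exact List.cons_injective heq
  · obtain ⟨m', rfl⟩ := hmD.resolve_left hm'
    simp only [List.tail_cons] at heq
    exact (hL.not_suffix_cons_cons a (b := false) l (heq ▸ hm)).elim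
  · obtain ⟨l', rfl⟩ := hlD.resolve_left hl'
    simp only [List.tail_cons] at heq
    exact (hL.not_suffix_cons_cons a (b := false) m (heq ▸ hl)).elim
  · obtain ⟨l', rfl⟩ := hlD.resolve_left hl'
    obtain ⟨m', rfl⟩ := hmD.resolve_left hm'
    simp only [List.tail_cons] at heq
    rw [heq]

noncomputable def letterPerm (hL : IsReduced L) (a : α) : Equiv.Perm (Suffix L) :=
  (injOn_prependOrDrop hL a).exists_perm_eqOn.choose

theorem letterPerm_eqOn (hL : IsReduced L) (a : α) :
    EqOn (letterPerm hL a) (prependOrDrop a) (prependOrDropDomain L a) :=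
  (injOn_prependOrDrop hL a).exists_perm_eqOn.choose_spec

theorem cond_letterPerm_apply (hL : IsReduced L) {a : α} {b : Bool} {l : List (α × Bool)}
    (h : (a, b) :: l <:+ L) :
    cond b (letterPerm hL a) (letterPerm hL a)⁻¹ ⟨l, (List.suffix_cons _ _).trans h⟩ =
      ⟨(a, b) :: l, h⟩ := by
  cases b
  · have hnot : ¬ (a, true) :: (a, false) :: l <:+ L := hL.not_suffix_cons_cons a l
    rw [cond_false, Equiv.Perm.inv_eq_iff_eq, letterPerm_eqOn hL a (Or.inr ⟨l, rfl⟩),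
      prependOrDrop]
    simp only [hnot, dite_false, List.tail_cons]
  · rw [cond_true, letterPerm_eqOn hL a (Or.inl h), prependOrDrop, dif_pos h]

theorem lift_letterPerm_mk_apply_nil (hL : IsReduced L) :
    ∀ {l : List (α × Bool)} (h : l <:+ L), lift (letterPerm hL) (mk l) Suffix.nil = ⟨l, h⟩
  | [], _ => rfl
  | (a, b) :: l, h => by
    rw [lift_mk, List.map_cons, List.prod_cons, Equiv.Perm.mul_apply, ← lift_mk,
      lift_letterPerm_mk_apply_nil hL ((List.suffix_cons _ _).trans h)]
    exact cond_letterPerm_apply hL h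

instance residuallyFinite : Group.ResiduallyFinite (FreeGroup α) := by
  classical
  refine Group.residuallyFinite_of_forall_exists_finite_monoidHom fun w hw => ?_
  refine ⟨_, _, inferInstance, lift (letterPerm (isReduced_toWord (x := w))), fun h => hw ?_⟩
  have := lift_letterPerm_mk_apply_nil isReduced_toWord (List.suffix_refl w.toWord)
  rw [mk_toWord, h, Equiv.Perm.one_apply] at this
  exact toWord_eq_nil_iff.mp (congrArg Subtype.val this).symm

end FreeGroup

instance IsFreeGroup.residuallyFinite (G : Type*) [Group G] [IsFreeGroup G] :
    Group.ResiduallyFinite G :=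
  .of_injective (IsFreeGroup.toFreeGroup G).toMonoidHom (IsFreeGroup.toFreeGroup G).injective

/-- Every free group is residually finite: every non-identity element avoids some
subgroup of finite index; equivalently, the intersection of all finite-index
subgroups is trivial. -/
theorem free_group_residually_finite (G : Type*) [Group G] [IsFreeGroup G] :
    (∀ w : G, w ≠ 1 → ∃ H : Subgroup G, H.index ≠ 0 ∧ w ∉ H) ∧
      (⨅ H ∈ {H : Subgroup G | H.index ≠ 0}, H) = (⊥ : Subgroup G) := by
  have separates : ∀ w : G, w ≠ 1 → ∃ H : Subgroup G, H.index ≠ 0 ∧ w ∉ H := by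
    simpa only [Subgroup.finiteIndex_iff] using
      Group.residuallyFinite_iff_exists_finiteIndex.mp (IsFreeGroup.residuallyFinite G)
  refine ⟨separates, (Subgroup.eq_bot_iff_forall _).mpr fun w hw => ?_⟩
  by_contra hw1
  obtain ⟨H, hH, hwH⟩ := separates w hw1
  exact hwH (Subgroup.mem_iInf.mp (Subgroup.mem_iInf.mp hw H) hH)
end
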